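/- arXiv:2107.13291 — 4 statements merged into one kernel-verified Lean document; each statement's English description precedes it below -/
import Mathlib

section
/- Let (ζ_α)_{α∈𝒜} be real random variables with dependency graph 𝒢 such that |ζ_α − E[ζ_α]| ≤ B almost surely for some B > 0 and all α ∈ 𝒜. Define 𝒵 := |𝒜|^{−1} Σ_{α∈𝒜} ζ_α and V := |𝒜|^{−1} Σ_{α∈𝒜} Var[ζ_α]. Then for every real p ≥ 2, E[ |𝒵 − E[𝒵]|^p ] ≤ (3π/2) [ (15 B deg(𝒢)/(2|𝒜|))^p p^p + (32 V deg(𝒢)/|𝒜|)^{p/2} p^{p/2} ]. -/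
noncomputable def greedy (A : ℕ → ℕ → Prop) (i : ℕ) : ℕ :=
  sInf {c | ∀ j, ∀ _ : j < i, A j i → greedy A j ≠ c}
termination_by i

open Classical in
noncomputable def greedyUsed (A : ℕ → ℕ → Prop) (i : ℕ) : Finset ℕ :=
  ((Finset.range i).filter fun j => A j i).image (greedy A)

open Classical in
lemma greedy_eq (A : ℕ → ℕ → Prop) (i : ℕ) :
    greedy A i = sInf {c | c ∉ greedyUsed A i} := by
  rw [greedy]
  congr 1
  ext c
  simp only [Set.mem_setOf_eq, greedyUsed, Finset.mem_image, Finset.mem_filter,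
    Finset.mem_range, not_exists, not_and]
  constructor
  · rintro h j ⟨hj, ha⟩
    exact h j hj ha
  · intro h j hj ha
    exact h j ⟨hj, ha⟩

lemma greedy_not_mem (A : ℕ → ℕ → Prop) (i : ℕ) : greedy A i ∉ greedyUsed A i := by
  have hne : {c | c ∉ greedyUsed A i}.Nonempty := by
    obtain ⟨c, hc⟩ := Finset.exists_notMem (greedyUsed A i)
    exact ⟨c, hc⟩
  have := Nat.sInf_mem hne
  rw [greedy_eq]
  exact this

lemma greedy_le_card (A : ℕ → ℕ → Prop) (i : ℕ) : greedy A i ≤ (greedyUsed A i).card := by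
  obtain ⟨c, hc1, hc2⟩ : ∃ c, c ≤ (greedyUsed A i).card ∧ c ∉ greedyUsed A i := by
    by_contra h
    push_neg at h
    have hsub : Finset.range ((greedyUsed A i).card + 1) ⊆ greedyUsed A i := by
      intro c hc
      exact h c (Nat.lt_succ_iff.mp (Finset.mem_range.mp hc))
    have := Finset.card_le_card hsub
    simp at this
  rw [greedy_eq]
  exact le_trans (Nat.sInf_le hc2) hc1

lemma greedy_ne (A : ℕ → ℕ → Prop) {j i : ℕ} (hj : j < i) (ha : A j i) :
    greedy A j ≠ greedy A i := by
  intro h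
  apply greedy_not_mem A i
  classical
  rw [greedyUsed]
  refine Finset.mem_image.mpr ⟨j, ?_, by convert h using 2⟩
  · simp only [Finset.mem_filter, Finset.mem_range]
    exact ⟨hj, ha⟩

open Classical in
lemma greedyUsed_card_le {ι : Type} [Fintype ι] (G : SimpleGraph ι) [DecidableRel G.Adj]
    (n : ℕ) (hn : 0 < n) (e : ι ≃ Fin n)
    (A : ℕ → ℕ → Prop)
    (hA : ∀ j i, A j i → ∃ (hj : j < n) (hi : i < n), G.Adj (e.symm ⟨j, hj⟩) (e.symm ⟨i, hi⟩))
    (i : ℕ) (hi : i < n) :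
    (greedyUsed A i).card ≤ G.degree (e.symm ⟨i, hi⟩) := by
  have h1 : (greedyUsed A i).card ≤ ((Finset.range i).filter fun j => A j i).card :=
    Finset.card_image_le
  refine h1.trans ?_
  rw [← SimpleGraph.card_neighborFinset_eq_degree]
  apply Finset.card_le_card_of_injOn (fun j => e.symm ⟨j % n, Nat.mod_lt j hn⟩)
  · intro j hj
    simp only [Finset.mem_coe, Finset.mem_filter, Finset.mem_range] at hj ⊢
    obtain ⟨hjn, hin, hadj⟩ := hA j i hj.2
    rw [SimpleGraph.mem_neighborFinset]
    have hmod : j % n = j := Nat.mod_eq_of_lt hjn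
    have : (⟨j % n, Nat.mod_lt j hn⟩ : Fin n) = ⟨j, hjn⟩ := by
      apply Fin.ext; simp [hmod]
    rw [this]
    have hieq : (⟨i, hin⟩ : Fin n) = ⟨i, hi⟩ := rfl
    rw [hieq] at hadj
    exact hadj.symm
  · intro j hj j' hj' hee
    simp only [Finset.mem_coe, Finset.mem_filter, Finset.mem_range] at hj hj'
    obtain ⟨hjn, _, _⟩ := hA j i hj.2
    obtain ⟨hj'n, _, _⟩ := hA j' i hj'.2
    have h5 := e.symm.injective hee
    have h6 : j % n = j' % n := congrArg Fin.val h5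
    rwa [Nat.mod_eq_of_lt hjn, Nat.mod_eq_of_lt hj'n] at h6

lemma exists_coloring {ι : Type} [Fintype ι] [Nonempty ι] (G : SimpleGraph ι)
    [DecidableRel G.Adj] :
    ∃ col : ι → ℕ, (∀ a, col a < G.maxDegree + 1) ∧ ∀ a b, G.Adj a b → col a ≠ col b := by
  classical
  set n := Fintype.card ι with hn_def
  have hn : 0 < n := Fintype.card_pos
  let e : ι ≃ Fin n := Fintype.equivFin ι
  set A : ℕ → ℕ → Prop := fun j i =>
    ∃ (hj : j < n) (hi : i < n), G.Adj (e.symm ⟨j, hj⟩) (e.symm ⟨i, hi⟩) with hA_def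
  refine ⟨fun a => greedy A (e a), ?_, ?_⟩
  · intro a
    show greedy A (e a) < G.maxDegree + 1
    have h1 := greedy_le_card A (e a)
    have h2 := greedyUsed_card_le G n hn e A (fun j i h => h) (e a) (e a).isLt
    have h3 : e.symm ⟨(e a : ℕ), (e a).isLt⟩ = a := by
      have : (⟨(e a : ℕ), (e a).isLt⟩ : Fin n) = e a := rfl
      rw [this, Equiv.symm_apply_apply]
    rw [h3] at h2
    have h4 := G.degree_le_maxDegree a
    omega
  · intro a b hadj
    have hne : (e a : ℕ) ≠ (e b : ℕ) := by
      intro h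
      exact hadj.ne (e.injective (Fin.ext h))
    have key : ∀ x y : ι, G.Adj x y → (e x : ℕ) < (e y : ℕ) →
        greedy A (e x) ≠ greedy A (e y) := by
      intro x y hxy hlt
      apply greedy_ne A hlt
      refine ⟨(e x).isLt, (e y).isLt, ?_⟩
      have hx : (⟨(e x : ℕ), (e x).isLt⟩ : Fin n) = e x := rfl
      have hy : (⟨(e y : ℕ), (e y).isLt⟩ : Fin n) = e y := rfl
      rw [hx, hy, Equiv.symm_apply_apply, Equiv.symm_apply_apply]
      exact hxy
    rcases lt_or_gt_of_ne hne with h | h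
    · exact key a b hadj h
    · exact (key b a hadj.symm h).symm

open MeasureTheory Real

lemma integrable_exp_of_ae_le {Ω : Type} [MeasurableSpace Ω] {μ : Measure Ω}
    [IsProbabilityMeasure μ] {f : Ω → ℝ} (hf : AEStronglyMeasurable f μ) {c : ℝ}
    (h : ∀ᵐ ω ∂μ, f ω ≤ c) : Integrable (fun ω => exp (f ω)) μ := by
  refine Integrable.mono' (integrable_const (exp c))
    (Real.continuous_exp.comp_aestronglyMeasurable hf) ?_
  filter_upwards [h] with ω hω
  rw [Real.norm_eq_abs, abs_of_pos (exp_pos _)]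
  exact exp_le_exp.mpr hω

lemma rpow_le_const_mul_exp {p : ℝ} (hp : 0 < p) {z : ℝ} (hz : 0 ≤ z) :
    z ^ p ≤ (p / exp 1) ^ p * exp z := by
  rcases eq_or_lt_of_le hz with h | hzpos
  · rw [← h, Real.zero_rpow hp.ne']
    positivity
  · have h1 : z ^ p = exp (Real.log z * p) := Real.rpow_def_of_pos hzpos p
    have h2 : (p / exp 1) ^ p = exp ((Real.log p - 1) * p) := by
      rw [Real.rpow_def_of_pos (by positivity), Real.log_div hp.ne' (exp_ne_zero 1),
        Real.log_exp]
    rw [h1, h2, ← Real.exp_add]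
    apply Real.exp_le_exp.mpr
    have h3 := Real.log_le_sub_one_of_pos (div_pos hzpos hp)
    rw [Real.log_div hzpos.ne' hp.ne'] at h3
    have h4 : (Real.log z - Real.log p) * p ≤ (z / p - 1) * p :=
      mul_le_mul_of_nonneg_right h3 hp.le
    have h5 : z / p * p = z := div_mul_cancel₀ z hp.ne'
    nlinarith

lemma abs_rpow_le_exp_add {p t : ℝ} (hp : 0 < p) (ht : 0 < t) (x : ℝ) :
    |x| ^ p ≤ (p / (exp 1 * t)) ^ p * (exp (t * x) + exp (-(t * x))) := by
  have key := rpow_le_const_mul_exp hp (z := t * |x|) (by positivity)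
  have h1 : |x| ^ p = (t * |x|) ^ p / t ^ p := by
    rw [Real.mul_rpow ht.le (abs_nonneg x), mul_comm, mul_div_assoc,
      div_self (by positivity : t ^ p ≠ 0), mul_one]
  have h2 : exp (t * |x|) ≤ exp (t * x) + exp (-(t * x)) := by
    rcases abs_cases x with ⟨h, _⟩ | ⟨h, _⟩
    · rw [h]; exact le_add_of_nonneg_right (exp_pos _).le
    · rw [h, mul_neg, ← neg_mul]
      exact le_add_of_nonneg_left (exp_pos _).le
  have h3 : (p / (exp 1 * t)) ^ p = (p / exp 1) ^ p / t ^ p := by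
    rw [← Real.div_rpow (by positivity) ht.le, div_div]
  rw [h1, h3]
  calc (t * |x|) ^ p / t ^ p ≤ ((p / exp 1) ^ p * exp (t * |x|)) / t ^ p := by
        apply div_le_div_of_nonneg_right ?_ (by positivity)
        exact key
    _ ≤ ((p / exp 1) ^ p * (exp (t * x) + exp (-(t * x)))) / t ^ p := by
        apply div_le_div_of_nonneg_right ?_ (by positivity)
        exact mul_le_mul_of_nonneg_left h2 (by positivity)
    _ = (p / exp 1) ^ p / t ^ p * (exp (t * x) + exp (-(t * x))) := by ring

lemma ofReal_prod_exp {γ : Type} (s : Finset γ) (a : γ → ℝ) :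
    ∏ c ∈ s, ENNReal.ofReal (exp (a c)) = ENNReal.ofReal (exp (∑ c ∈ s, a c)) := by
  induction s using Finset.cons_induction with
  | empty => simp
  | cons c s hc ih =>
      rw [Finset.prod_cons, ih, Finset.sum_cons, Real.exp_add,
        ENNReal.ofReal_mul (exp_nonneg _)]

open MeasureTheory ProbabilityTheory Real
open scoped BigOperators

set_option maxHeartbeats 1000000 in
/-- Rosenthal-type moment inequality derived from Janson's concentration inequality,
for an average of partly dependent, bounded-centered random variables. -/
theorem rosenthal_from_janson
    {Ω : Type} [MeasurableSpace Ω] (μ : Measure Ω) [IsProbabilityMeasure μ]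
    {ι : Type} [Fintype ι] [Nonempty ι]
    (G : SimpleGraph ι) [DecidableRel G.Adj]
    (ζ : ι → Ω → ℝ) (hζmeas : ∀ α, Measurable (ζ α)) (hζL2 : ∀ α, MemLp (ζ α) 2 μ)
    (B : ℝ) (hB : 0 < B)
    (hbdd : ∀ α : ι, ∀ᵐ ω ∂μ, |ζ α ω - ∫ ω', ζ α ω' ∂μ| ≤ B)
    -- `G` is a dependency graph for the family `(ζ α)`
    (hdep : ∀ A B' : Set ι, Disjoint A B' → (∀ a ∈ A, ∀ b ∈ B', ¬ G.Adj a b) →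
      IndepFun (fun ω (a : A) => ζ a ω) (fun ω (b : B') => ζ b ω) μ)
    (p : ℝ) (hp : 2 ≤ p) :
    ∫ ω, |(Fintype.card ι : ℝ)⁻¹ * ∑ α : ι, ζ α ω -
        ∫ ω', (Fintype.card ι : ℝ)⁻¹ * ∑ α : ι, ζ α ω' ∂μ| ^ p ∂μ ≤
      3 * π / 2 *
        ((15 * B * ((G.maxDegree : ℝ) + 1) / (2 * (Fintype.card ι : ℝ))) ^ p * p ^ p +
          (32 * ((Fintype.card ι : ℝ)⁻¹ * ∑ α : ι, variance (ζ α) μ) *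
            ((G.maxDegree : ℝ) + 1) / (Fintype.card ι : ℝ)) ^ (p / 2) * p ^ (p / 2)) := by
  classical
  obtain ⟨col, hcolLt, hcolProper⟩ := exists_coloring G
  have hp0 : (0:ℝ) < p := lt_of_lt_of_le two_pos hp
  set n := Fintype.card ι with hn_def
  have hn : 0 < n := Fintype.card_pos
  set N : ℝ := (n : ℝ) with hN_def
  have hN : 0 < N := by rw [hN_def]; exact_mod_cast hn
  set Dn : ℕ := G.maxDegree + 1 with hDn_def
  set D : ℝ := (Dn : ℝ) with hD_def
  have hD : 0 < D := by rw [hD_def, hDn_def]; positivity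
  have hDcast : ((G.maxDegree : ℝ) + 1) = D := by rw [hD_def, hDn_def]; push_cast; ring
  set m : ι → ℝ := fun α => ∫ ω, ζ α ω ∂μ with hm_def
  set Y : ι → Ω → ℝ := fun α ω => ζ α ω - m α with hY_def
  have hYmeas : ∀ α, Measurable (Y α) := fun α => (hζmeas α).sub measurable_const
  have hζint : ∀ α, Integrable (ζ α) μ := fun α => (hζL2 α).integrable one_le_two
  have hYint : ∀ α, Integrable (Y α) μ := fun α => (hζint α).sub (integrable_const _)
  have hYmean : ∀ α, ∫ ω, Y α ω ∂μ = 0 := by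
    intro α
    simp only [hY_def]
    rw [integral_sub (hζint α) (integrable_const _), integral_const]
    simp [hm_def]
  have hYbdd : ∀ α, ∀ᵐ ω ∂μ, |Y α ω| ≤ B := hbdd
  have hYbddAll : ∀ᵐ ω ∂μ, ∀ α, |Y α ω| ≤ B := ae_all_iff.mpr hYbdd
  set X : Ω → ℝ := fun ω => N⁻¹ * ∑ α : ι, Y α ω with hX_def
  have hXmeas : Measurable X :=
    (Finset.measurable_sum Finset.univ (fun α _ => hYmeas α)).const_mul _
  have hXbdd : ∀ᵐ ω ∂μ, |X ω| ≤ B := by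
    filter_upwards [hYbddAll] with ω hω
    have h1 : |X ω| = N⁻¹ * |∑ α : ι, Y α ω| := by
      rw [hX_def, abs_mul, abs_of_pos (by positivity : (0:ℝ) < N⁻¹)]
    rw [h1]
    have h2 : |∑ α : ι, Y α ω| ≤ ∑ α : ι, B :=
      (Finset.abs_sum_le_sum_abs _ _).trans (Finset.sum_le_sum fun α _ => hω α)
    calc N⁻¹ * |∑ α : ι, Y α ω| ≤ N⁻¹ * ∑ α : ι, B :=
          mul_le_mul_of_nonneg_left h2 (by positivity)
      _ = B := by
          rw [Finset.sum_const, Finset.card_univ, nsmul_eq_mul, ← hn_def, ← hN_def]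
          field_simp
  set v : ι → ℝ := fun α => variance (ζ α) μ with hv_def
  have hv0 : ∀ α, 0 ≤ v α := fun α => variance_nonneg _ _
  set Sv : ℝ := ∑ α : ι, v α with hSv_def
  have hSvnn : 0 ≤ Sv := Finset.sum_nonneg fun α _ => hv0 α
  set K : ℝ := D * Sv / N ^ 2 with hK_def
  have hK0 : 0 ≤ K := by rw [hK_def]; positivity
  set t0 : ℝ := N / (D * B) with ht0_def
  have ht0 : 0 < t0 := by rw [ht0_def]; positivity
  have hexpint : ∀ (s : Finset ι) (u : ℝ),
      Integrable (fun ω => exp (∑ α ∈ s, u * Y α ω)) μ := by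
    intro s u
    refine integrable_exp_of_ae_le
      ((Finset.measurable_sum s (fun α _ => (hYmeas α).const_mul u)).aestronglyMeasurable)
      (c := (s.card : ℝ) * (|u| * B)) ?_
    filter_upwards [hYbddAll] with ω hω
    have hb : ∀ α ∈ s, |u * Y α ω| ≤ |u| * B := fun α _ => by
      rw [abs_mul]; exact mul_le_mul_of_nonneg_left (hω α) (abs_nonneg u)
    calc ∑ α ∈ s, u * Y α ω ≤ |∑ α ∈ s, u * Y α ω| := le_abs_self _
      _ ≤ ∑ α ∈ s, |u * Y α ω| := Finset.abs_sum_le_sum_abs _ _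
      _ ≤ ∑ α ∈ s, (|u| * B) := Finset.sum_le_sum hb
      _ = (s.card : ℝ) * (|u| * B) := by rw [Finset.sum_const, nsmul_eq_mul]
  have mgf_one : ∀ (α : ι) (u : ℝ), |u| * B ≤ 1 →
      ∫ ω, exp (u * Y α ω) ∂μ ≤ exp (u ^ 2 * v α) := by
    intro α u hu
    have hsq : Integrable (fun ω => (Y α ω) ^ 2) μ :=
      ((hζL2 α).sub (memLp_const (m α))).integrable_sq
    have hvar : v α = ∫ ω, (Y α ω) ^ 2 ∂μ := by
      have h := variance_eq_integral (μ := μ) (hζmeas α).aemeasurable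
      show variance (ζ α) μ = ∫ ω, (Y α ω) ^ 2 ∂μ
      rw [h]
    have hptwise : ∀ᵐ ω ∂μ, exp (u * Y α ω) ≤ 1 + u * Y α ω + u ^ 2 * (Y α ω) ^ 2 := by
      filter_upwards [hYbdd α] with ω hω
      have habs : |u * Y α ω| ≤ 1 := by
        rw [abs_mul]
        calc |u| * |Y α ω| ≤ |u| * B := mul_le_mul_of_nonneg_left hω (abs_nonneg u)
          _ ≤ 1 := hu
      have h2 := (abs_le.mp (Real.abs_exp_sub_one_sub_id_le habs)).2
      have h3 : (u * Y α ω) ^ 2 = u ^ 2 * (Y α ω) ^ 2 := by ring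
      linarith [h2, h3.le, h3.ge]
    have hIntExp : Integrable (fun ω => exp (u * Y α ω)) μ := by
      have h := hexpint {α} u
      simpa using h
    have hInt2 : Integrable (fun ω => 1 + u * Y α ω + u ^ 2 * (Y α ω) ^ 2) μ :=
      ((integrable_const 1).add ((hYint α).const_mul u)).add (hsq.const_mul _)
    calc ∫ ω, exp (u * Y α ω) ∂μ
        ≤ ∫ ω, (1 + u * Y α ω + u ^ 2 * (Y α ω) ^ 2) ∂μ :=
          integral_mono_ae hIntExp hInt2 hptwise
      _ = 1 + u * ∫ ω, Y α ω ∂μ + u ^ 2 * ∫ ω, (Y α ω) ^ 2 ∂μ := by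
          have i1 : Integrable (fun ω => 1 + u * Y α ω) μ := by
            exact (integrable_const 1).add ((hYint α).const_mul u)
          have i2 : Integrable (fun ω => u ^ 2 * (Y α ω) ^ 2) μ := by
            exact hsq.const_mul _
          rw [integral_add i1 i2, integral_add (integrable_const 1) ((hYint α).const_mul u),
            integral_const, integral_const_mul, integral_const_mul]
          simp
      _ = 1 + u ^ 2 * v α := by rw [hYmean α, hvar]; ring
      _ ≤ exp (u ^ 2 * v α) := by linarith [Real.add_one_le_exp (u ^ 2 * v α)]
  have mgf_indep : ∀ (s : Finset ι), (∀ a ∈ s, ∀ b ∈ s, ¬ G.Adj a b) → ∀ u : ℝ,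
      ∫ ω, exp (∑ α ∈ s, u * Y α ω) ∂μ = ∏ α ∈ s, ∫ ω, exp (u * Y α ω) ∂μ := by
    intro s
    induction s using Finset.induction_on with
    | empty => intro _ u; simp
    | @insert a s ha ih =>
      intro hs u
      have hs' : ∀ a' ∈ s, ∀ b ∈ s, ¬ G.Adj a' b := fun a' ha' b hb =>
        hs a' (Finset.mem_insert_of_mem ha') b (Finset.mem_insert_of_mem hb)
      have hmem : a ∈ ({a} : Set ι) := Set.mem_singleton a
      have hindep : IndepFun (fun ω => exp (u * Y a ω))
          (fun ω => exp (∑ α ∈ s, u * Y α ω)) μ := by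
        have hd : Disjoint ({a} : Set ι) (↑s : Set ι) := by
          rw [Set.disjoint_singleton_left]
          exact fun h => ha (Finset.mem_coe.mp h)
        have hna : ∀ x ∈ ({a} : Set ι), ∀ b ∈ (↑s : Set ι), ¬ G.Adj x b := by
          intro x hx b hb
          rw [Set.mem_singleton_iff] at hx
          subst hx
          exact hs x (Finset.mem_insert_self _ _) b (Finset.mem_insert_of_mem hb)
        have H := hdep {a} (↑s) hd hna
        have hφ : Measurable (fun x : (({a} : Set ι) → ℝ) =>
            exp (u * (x ⟨a, hmem⟩ - m a))) :=
          by fun_prop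
        have hψ : Measurable (fun x : ((↑s : Set ι) → ℝ) =>
            exp (∑ b : (↑s : Set ι), u * (x b - m b))) := by
          apply Real.measurable_exp.comp
          exact Finset.measurable_sum Finset.univ
            (fun b _ => by fun_prop)
        have H2 := H.comp hφ hψ
        have e1 : ((fun x : (({a} : Set ι) → ℝ) => exp (u * (x ⟨a, hmem⟩ - m a))) ∘
            (fun ω (x : ({a} : Set ι)) => ζ x ω)) = fun ω => exp (u * Y a ω) := by
          funext ω; rfl
        have e2 : ((fun x : ((↑s : Set ι) → ℝ) => exp (∑ b : (↑s : Set ι), u * (x b - m b))) ∘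
            (fun ω (b : (↑s : Set ι)) => ζ b ω)) = fun ω => exp (∑ α ∈ s, u * Y α ω) := by
          funext ω
          simp only [Function.comp_apply]
          congr 1
          exact Finset.sum_finset_coe (fun α => u * Y α ω) s
        rw [e1, e2] at H2
        exact H2
      have hsplit : (fun ω => exp (∑ α ∈ insert a s, u * Y α ω)) =
          fun ω => exp (u * Y a ω) * exp (∑ α ∈ s, u * Y α ω) := by
        funext ω; rw [Finset.sum_insert ha, Real.exp_add]
      have hInta : Integrable (fun ω => exp (u * Y a ω)) μ := by
        have h := hexpint {a} u; simpa using h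
      rw [hsplit]
      have hmul : ∫ ω, exp (u * Y a ω) * exp (∑ α ∈ s, u * Y α ω) ∂μ =
          (∫ ω, exp (u * Y a ω) ∂μ) * ∫ ω, exp (∑ α ∈ s, u * Y α ω) ∂μ :=
        hindep.integral_fun_mul_eq_mul_integral hInta.aestronglyMeasurable
          (hexpint s u).aestronglyMeasurable
      rw [hmul, ih hs' u, Finset.prod_insert ha]
  have mgf_X : ∀ t : ℝ, |t| ≤ t0 → ∫ ω, exp (t * X ω) ∂μ ≤ exp (t ^ 2 * K) := by
    intro t ht
    set u : ℝ := t * (D / N) with hu_def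
    have hu : |u| * B ≤ 1 := by
      have h1 : |u| = |t| * (D / N) := by
        rw [hu_def, abs_mul, abs_of_pos (by positivity : (0:ℝ) < D / N)]
      rw [h1]
      have h2 : |t| * (D / N) * B ≤ t0 * (D / N) * B := by
        have h3 := mul_le_mul_of_nonneg_right ht (le_of_lt (by positivity : (0:ℝ) < D / N))
        exact mul_le_mul_of_nonneg_right h3 hB.le
      refine h2.trans ?_
      have h4 : t0 * (D / N) * B = 1 := by
        rw [ht0_def]
        field_simp
        try ring
      rw [h4]
    set sC : ℕ → Finset ι := fun c => Finset.univ.filter (fun α => col α = c) with hsC_def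
    have hmaps : ∀ α : ι, α ∈ Finset.univ → col α ∈ Finset.range Dn := fun α _ =>
      Finset.mem_range.mpr (hcolLt α)
    have hfib : ∀ f : ι → ℝ, ∑ c ∈ Finset.range Dn, ∑ α ∈ sC c, f α = ∑ α : ι, f α :=
      fun f => Finset.sum_fiberwise_of_maps_to hmaps f
    set g : ℕ → Ω → ℝ := fun c ω => ∑ α ∈ sC c, u * Y α ω with hg_def
    have hgmeas : ∀ c, Measurable (g c) := fun c =>
      Finset.measurable_sum _ (fun α _ => (hYmeas α).const_mul u)
    have hgint : ∀ c, Integrable (fun ω => exp (g c ω)) μ := fun c => hexpint _ u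
    have hgsum : ∀ ω, ∑ c ∈ Finset.range Dn, g c ω = (t * D) * X ω := by
      intro ω
      have h1 : ∑ c ∈ Finset.range Dn, g c ω = ∑ α : ι, u * Y α ω :=
        hfib (fun α => u * Y α ω)
      rw [h1, ← Finset.mul_sum, hX_def, hu_def]
      field_simp
      try ring
    have hgc_bound : ∀ c, ∫ ω, exp (g c ω) ∂μ ≤ exp (u ^ 2 * ∑ α ∈ sC c, v α) := by
      intro c
      have hind : ∀ a ∈ sC c, ∀ b ∈ sC c, ¬ G.Adj a b := by
        intro a haM b hbM hadj
        rw [hsC_def] at haM hbM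
        simp only [Finset.mem_filter] at haM hbM
        exact hcolProper a b hadj (haM.2.trans hbM.2.symm)
      have h1 : ∫ ω, exp (g c ω) ∂μ = ∏ α ∈ sC c, ∫ ω, exp (u * Y α ω) ∂μ :=
        mgf_indep (sC c) hind u
      rw [h1]
      calc ∏ α ∈ sC c, ∫ ω, exp (u * Y α ω) ∂μ
          ≤ ∏ α ∈ sC c, exp (u ^ 2 * v α) :=
            Finset.prod_le_prod (fun α _ => integral_nonneg fun ω => (exp_pos _).le)
              (fun α _ => mgf_one α u hu)
        _ = exp (∑ α ∈ sC c, u ^ 2 * v α) := (Real.exp_sum _ _).symm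
        _ = exp (u ^ 2 * ∑ α ∈ sC c, v α) := by rw [Finset.mul_sum]
    set F : ℕ → Ω → ENNReal := fun c ω => ENNReal.ofReal (exp (g c ω)) with hF_def
    have hFmeas : ∀ c ∈ Finset.range Dn, AEMeasurable (F c) μ := fun c _ =>
      (ENNReal.measurable_ofReal.comp (Real.measurable_exp.comp (hgmeas c))).aemeasurable
    have hpsum : ∑ _c ∈ Finset.range Dn, (1 / D) = 1 := by
      rw [Finset.sum_const, Finset.card_range, nsmul_eq_mul, hD_def]
      field_simp
      exact div_self hD.ne'
    have hpnn : ∀ c ∈ Finset.range Dn, (0:ℝ) ≤ 1 / D := fun _ _ => by positivity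
    have hpoint : ∀ ω, ENNReal.ofReal (exp (t * X ω)) =
        ∏ c ∈ Finset.range Dn, F c ω ^ (1 / D) := by
      intro ω
      have h1 : ∀ c, F c ω ^ (1 / D) = ENNReal.ofReal (exp (g c ω * (1 / D))) := by
        intro c
        rw [hF_def, ENNReal.ofReal_rpow_of_pos (exp_pos _)]
        congr 1
        rw [Real.rpow_def_of_pos (exp_pos _), Real.log_exp]
      simp only [h1]
      rw [ofReal_prod_exp]
      congr 2
      rw [← Finset.sum_mul, hgsum ω]
      field_simp
      try ring
    have hmain : ∫ ω, exp (t * X ω) ∂μ ≤ exp (u ^ 2 * Sv / D) := by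
      have e1 : ∫ ω, exp (t * X ω) ∂μ =
          (∫⁻ ω, ENNReal.ofReal (exp (t * X ω)) ∂μ).toReal := by
        rw [integral_eq_lintegral_of_nonneg_ae (ae_of_all _ fun ω => (exp_pos _).le)
          ((Real.measurable_exp.comp (hXmeas.const_mul t)).aestronglyMeasurable)]
      have e2 : (∫⁻ ω, ENNReal.ofReal (exp (t * X ω)) ∂μ) =
          ∫⁻ ω, ∏ c ∈ Finset.range Dn, F c ω ^ (1 / D) ∂μ :=
        lintegral_congr fun ω => hpoint ω
      have e3 := ENNReal.lintegral_prod_norm_pow_le (μ := μ) (f := F)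
        (Finset.range Dn) hFmeas hpsum hpnn
      have e4 : ∀ c ∈ Finset.range Dn, (∫⁻ ω, F c ω ∂μ) ≤
          ENNReal.ofReal (exp (u ^ 2 * ∑ α ∈ sC c, v α)) := by
        intro c _
        rw [hF_def, ← ofReal_integral_eq_lintegral_ofReal (hgint c)
          (ae_of_all _ fun ω => (exp_pos _).le)]
        exact ENNReal.ofReal_le_ofReal (hgc_bound c)
      have e5 : ∏ c ∈ Finset.range Dn, (∫⁻ ω, F c ω ∂μ) ^ (1 / D) ≤
          ENNReal.ofReal (exp (u ^ 2 * Sv / D)) := by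
        calc ∏ c ∈ Finset.range Dn, (∫⁻ ω, F c ω ∂μ) ^ (1 / D)
            ≤ ∏ c ∈ Finset.range Dn,
              (ENNReal.ofReal (exp (u ^ 2 * ∑ α ∈ sC c, v α))) ^ (1 / D) :=
              Finset.prod_le_prod' (fun c hc => ENNReal.rpow_le_rpow (e4 c hc) (by positivity))
          _ = ∏ c ∈ Finset.range Dn,
              ENNReal.ofReal (exp ((u ^ 2 * ∑ α ∈ sC c, v α) * (1 / D))) := by
              refine Finset.prod_congr rfl fun c _ => ?_
              rw [ENNReal.ofReal_rpow_of_pos (exp_pos _)]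
              congr 1
              rw [Real.rpow_def_of_pos (exp_pos _), Real.log_exp]
          _ = ENNReal.ofReal
              (exp (∑ c ∈ Finset.range Dn, (u ^ 2 * ∑ α ∈ sC c, v α) * (1 / D))) := by
              rw [ofReal_prod_exp]
          _ = ENNReal.ofReal (exp (u ^ 2 * Sv / D)) := by
              congr 2
              rw [← Finset.sum_mul]
              have h6 : ∑ c ∈ Finset.range Dn, u ^ 2 * ∑ α ∈ sC c, v α =
                  u ^ 2 * ∑ c ∈ Finset.range Dn, ∑ α ∈ sC c, v α := by
                rw [Finset.mul_sum]
              rw [h6, hfib v, ← hSv_def]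
              ring
      calc ∫ ω, exp (t * X ω) ∂μ
          = (∫⁻ ω, ENNReal.ofReal (exp (t * X ω)) ∂μ).toReal := e1
        _ ≤ (ENNReal.ofReal (exp (u ^ 2 * Sv / D))).toReal := by
            apply ENNReal.toReal_mono ENNReal.ofReal_ne_top
            rw [e2]
            exact e3.trans e5
        _ = exp (u ^ 2 * Sv / D) := ENNReal.toReal_ofReal (exp_nonneg _)
    refine hmain.trans (Real.exp_le_exp.mpr ?_)
    have h7 : u ^ 2 * Sv / D = t ^ 2 * K := by
      rw [hu_def, hK_def]
      field_simp
      try ring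
    rw [h7]
  have moment : ∀ t : ℝ, 0 < t → t ≤ t0 → t ^ 2 * K ≤ p / 2 →
      ∫ ω, |X ω| ^ p ∂μ ≤ 2 * (p / t) ^ p := by
    intro t ht1 ht2 ht3
    have hintXp : Integrable (fun ω => |X ω| ^ p) μ := by
      refine Integrable.mono' (integrable_const (B ^ p)) ?_ ?_
      · exact ((Real.continuous_rpow_const hp0.le).measurable.comp
          hXmeas.abs).aestronglyMeasurable
      · filter_upwards [hXbdd] with ω hω
        rw [Real.norm_eq_abs, abs_of_nonneg (Real.rpow_nonneg (abs_nonneg _) p)]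
        exact Real.rpow_le_rpow (abs_nonneg _) hω hp0.le
    have hintE1 : Integrable (fun ω => exp (t * X ω)) μ := by
      refine integrable_exp_of_ae_le ((hXmeas.const_mul t).aestronglyMeasurable)
        (c := t * B) ?_
      filter_upwards [hXbdd] with ω hω
      calc t * X ω ≤ |t * X ω| := le_abs_self _
        _ = t * |X ω| := by rw [abs_mul, abs_of_pos ht1]
        _ ≤ t * B := mul_le_mul_of_nonneg_left hω ht1.le
    have hintE2 : Integrable (fun ω => exp (-(t * X ω))) μ := by
      refine integrable_exp_of_ae_le ((hXmeas.const_mul t).neg.aestronglyMeasurable)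
        (c := t * B) ?_
      filter_upwards [hXbdd] with ω hω
      calc -(t * X ω) ≤ |t * X ω| := neg_le_abs _
        _ = t * |X ω| := by rw [abs_mul, abs_of_pos ht1]
        _ ≤ t * B := mul_le_mul_of_nonneg_left hω ht1.le
    have hle : ∫ ω, |X ω| ^ p ∂μ ≤ (p / (exp 1 * t)) ^ p *
        ((∫ ω, exp (t * X ω) ∂μ) + ∫ ω, exp (-(t * X ω)) ∂μ) := by
      calc ∫ ω, |X ω| ^ p ∂μ
          ≤ ∫ ω, (p / (exp 1 * t)) ^ p * (exp (t * X ω) + exp (-(t * X ω))) ∂μ :=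
            integral_mono_ae hintXp ((hintE1.add hintE2).const_mul _)
              (ae_of_all _ fun ω => abs_rpow_le_exp_add hp0 ht1 (X ω))
        _ = (p / (exp 1 * t)) ^ p *
            ((∫ ω, exp (t * X ω) ∂μ) + ∫ ω, exp (-(t * X ω)) ∂μ) := by
            rw [integral_const_mul, integral_add hintE1 hintE2]
    have hmg1 : ∫ ω, exp (t * X ω) ∂μ ≤ exp (t ^ 2 * K) :=
      mgf_X t (by rw [abs_of_pos ht1]; exact ht2)
    have hmg2 : ∫ ω, exp (-(t * X ω)) ∂μ ≤ exp (t ^ 2 * K) := by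
      have h := mgf_X (-t) (by rw [abs_neg, abs_of_pos ht1]; exact ht2)
      have h1 : (fun ω => exp (-t * X ω)) = fun ω => exp (-(t * X ω)) := by
        funext ω; rw [neg_mul]
      rw [h1, neg_sq] at h
      exact h
    have hsum : (∫ ω, exp (t * X ω) ∂μ) + ∫ ω, exp (-(t * X ω)) ∂μ ≤ 2 * exp (p / 2) := by
      have h2 : exp (t ^ 2 * K) ≤ exp (p / 2) := Real.exp_le_exp.mpr ht3
      linarith
    have hnn : (0:ℝ) ≤ (p / (exp 1 * t)) ^ p := Real.rpow_nonneg (by positivity) p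
    have hfinal : (p / (exp 1 * t)) ^ p * (2 * exp (p / 2)) ≤ 2 * (p / t) ^ p := by
      have hsplit : (p / (exp 1 * t)) ^ p = (p / t) ^ p / exp p := by
        rw [show p / (exp 1 * t) = (p / t) / exp 1 by rw [div_div, mul_comm]]
        rw [Real.div_rpow (by positivity) (exp_pos 1).le, Real.exp_one_rpow]
      rw [hsplit]
      have hE : exp (p / 2) ≤ exp p := Real.exp_le_exp.mpr (by linarith)
      have h0 : (0:ℝ) ≤ (p / t) ^ p := Real.rpow_nonneg (by positivity) p
      have h1 : (p / t) ^ p / exp p * (2 * exp (p / 2)) ≤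
          (p / t) ^ p / exp p * (2 * exp p) := by
        apply mul_le_mul_of_nonneg_left (by linarith) (by positivity)
      refine h1.trans (le_of_eq ?_)
      field_simp
      try ring
    calc ∫ ω, |X ω| ^ p ∂μ
        ≤ (p / (exp 1 * t)) ^ p *
          ((∫ ω, exp (t * X ω) ∂μ) + ∫ ω, exp (-(t * X ω)) ∂μ) := hle
      _ ≤ (p / (exp 1 * t)) ^ p * (2 * exp (p / 2)) := mul_le_mul_of_nonneg_left hsum hnn
      _ ≤ 2 * (p / t) ^ p := hfinal
  have hEZfun : (fun ω => |N⁻¹ * ∑ α : ι, ζ α ω - ∫ ω', N⁻¹ * ∑ α : ι, ζ α ω' ∂μ| ^ p) =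
      fun ω => |X ω| ^ p := by
    have hI : ∫ ω', N⁻¹ * ∑ α : ι, ζ α ω' ∂μ = N⁻¹ * ∑ α : ι, m α := by
      rw [integral_const_mul, integral_finset_sum _ (fun α _ => hζint α)]
    funext ω
    rw [hI]
    have h1 : N⁻¹ * ∑ α : ι, ζ α ω - N⁻¹ * ∑ α : ι, m α = X ω := by
      rw [hX_def, ← mul_sub, ← Finset.sum_sub_distrib]
    rw [h1]
  rw [hDcast, hEZfun]
  have hπ : (2:ℝ) ≤ 3 * π / 2 := by nlinarith [Real.pi_gt_three]
  have hT1nn : (0:ℝ) ≤ (15 * B * D / (2 * N)) ^ p * p ^ p := by positivity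
  have hT2nn : (0:ℝ) ≤ (32 * (N⁻¹ * Sv) * D / N) ^ (p / 2) * p ^ (p / 2) := by positivity
  have h32 : (0:ℝ) ≤ 3 * π / 2 := by linarith
  by_cases hcase : t0 ^ 2 * K ≤ p / 2
  · have h1 := moment t0 ht0 le_rfl hcase
    refine h1.trans ?_
    have hpt0 : p / t0 = (D * B / N) * p := by
      rw [ht0_def]
      field_simp
      try ring
    have h2 : (p / t0) ^ p = (D * B / N) ^ p * p ^ p := by
      rw [hpt0, Real.mul_rpow (by positivity) hp0.le]
    have h3 : (D * B / N) ^ p ≤ (15 * B * D / (2 * N)) ^ p := by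
      apply Real.rpow_le_rpow (by positivity) ?_ hp0.le
      rw [div_le_div_iff₀ (by positivity) (by positivity)]
      nlinarith [mul_pos (mul_pos hD hB) hN]
    calc 2 * (p / t0) ^ p = 2 * ((D * B / N) ^ p * p ^ p) := by rw [h2]
      _ ≤ 2 * ((15 * B * D / (2 * N)) ^ p * p ^ p) := by
          refine mul_le_mul_of_nonneg_left ?_ (by norm_num)
          exact mul_le_mul_of_nonneg_right h3 (Real.rpow_nonneg hp0.le p)
      _ ≤ (3 * π / 2) * ((15 * B * D / (2 * N)) ^ p * p ^ p) :=
          mul_le_mul_of_nonneg_right hπ hT1nn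
      _ ≤ 3 * π / 2 * ((15 * B * D / (2 * N)) ^ p * p ^ p +
            (32 * (N⁻¹ * Sv) * D / N) ^ (p / 2) * p ^ (p / 2)) := by
          rw [mul_add]
          linarith [mul_nonneg h32 hT2nn]
  · push_neg at hcase
    have hKpos : 0 < K := by
      rcases lt_or_eq_of_le hK0 with h | h
      · exact h
      · exfalso
        rw [← h, mul_zero] at hcase
        linarith
    set t : ℝ := Real.sqrt (p / (2 * K)) with ht_def
    have hq : 0 < p / (2 * K) := by positivity
    have ht1 : 0 < t := Real.sqrt_pos.mpr hq
    have ht2sq : t ^ 2 = p / (2 * K) := Real.sq_sqrt hq.le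
    have ht2 : t ≤ t0 := by
      rw [ht_def, show t0 = Real.sqrt (t0 ^ 2) from (Real.sqrt_sq ht0.le).symm]
      apply Real.sqrt_le_sqrt
      rw [div_le_iff₀ (by positivity)]
      nlinarith [hcase]
    have ht3 : t ^ 2 * K ≤ p / 2 := by
      rw [ht2sq]
      have : p / (2 * K) * K = p / 2 := by
        field_simp
        try ring
      rw [this]
    have h1 := moment t ht1 ht2 ht3
    refine h1.trans ?_
    have h0pt : (0:ℝ) ≤ p / t := by positivity
    have hptsq : (p / t) ^ 2 = 2 * K * p := by
      rw [div_pow, ht2sq]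
      field_simp
      try ring
    have hptp : (p / t) ^ p = (2 * K * p) ^ (p / 2) := by
      have e1 : ((p / t) ^ ((2:ℕ):ℝ)) ^ (p / 2) = (p / t) ^ p := by
        rw [← Real.rpow_mul h0pt]
        congr 1
        push_cast
        ring
      rw [← e1, Real.rpow_natCast, hptsq]
    have h3 : (2 * K * p) ^ (p / 2) = (2 * K) ^ (p / 2) * p ^ (p / 2) :=
      Real.mul_rpow (by positivity) hp0.le
    have hKalt : 32 * (N⁻¹ * Sv) * D / N = 16 * (2 * K) := by
      rw [hK_def]
      field_simp
      try ring
    have h4 : (2 * K) ^ (p / 2) ≤ (32 * (N⁻¹ * Sv) * D / N) ^ (p / 2) := by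
      rw [hKalt]
      exact Real.rpow_le_rpow (by positivity) (by nlinarith [hKpos]) (by positivity)
    calc 2 * (p / t) ^ p = 2 * ((2 * K) ^ (p / 2) * p ^ (p / 2)) := by rw [hptp, h3]
      _ ≤ 2 * ((32 * (N⁻¹ * Sv) * D / N) ^ (p / 2) * p ^ (p / 2)) := by
          refine mul_le_mul_of_nonneg_left ?_ (by norm_num)
          exact mul_le_mul_of_nonneg_right h4 (Real.rpow_nonneg hp0.le _)
      _ ≤ (3 * π / 2) * ((32 * (N⁻¹ * Sv) * D / N) ^ (p / 2) * p ^ (p / 2)) :=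
          mul_le_mul_of_nonneg_right hπ hT2nn
      _ ≤ 3 * π / 2 * ((15 * B * D / (2 * N)) ^ p * p ^ p +
            (32 * (N⁻¹ * Sv) * D / N) ^ (p / 2) * p ^ (p / 2)) := by
          rw [mul_add]
          linarith [mul_nonneg h32 hT1nn]
end

section
/- Let a, b, c > 0 and β ∈ (0,1] be constants and let (x̲(N))_{N≥2} be a sequence of positive real numbers decreasing to 0. Let U be a real random variable with E[|U|] < ∞ such that for every integer N ≥ 2 and every x ≥ x̲(N), P[U ≥ x] ≤ aN [exp(−x^{2−β}/b) + exp(−x/c)]. Then for every integer N with N ≥ min{ n ≥ 2 : x̲(n) ≤ b^{1/(2−β)} and log(an) ≥ 1 }, it holds that E[U] ≤ 3 (b log(aN))^{1/(2−β)} + 2c log(aN). -/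
open MeasureTheory Real

lemma integral_exp_neg_mul_Ioi_zero {k : ℝ} (hk : 0 < k) :
    ∫ s in Set.Ioi (0:ℝ), Real.exp (-(k * s)) = 1 / k := by
  have hderiv : ∀ x ∈ Set.Ici (0:ℝ),
      HasDerivAt (fun s : ℝ => -Real.exp (-(k * s)) / k) (Real.exp (-(k * x))) x := by
    intro x _
    have h1 : HasDerivAt (fun s : ℝ => -(k * s)) (-k) x := by
      simpa using ((hasDerivAt_id x).const_mul k).fun_neg
    have h2 : HasDerivAt (fun s : ℝ => Real.exp (-(k * s))) (Real.exp (-(k * x)) * (-k)) x :=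
      (Real.hasDerivAt_exp _).comp x h1
    have h3 := (h2.fun_neg).div_const k
    refine h3.congr_deriv ?_
    rw [mul_neg, neg_neg, mul_div_assoc, div_self hk.ne', mul_one]
  have hint : MeasureTheory.IntegrableOn (fun s : ℝ => Real.exp (-(k * s))) (Set.Ioi 0) := by
    have := exp_neg_integrableOn_Ioi 0 hk
    simpa [neg_mul] using this
  have htend : Filter.Tendsto (fun s : ℝ => -Real.exp (-(k * s)) / k) Filter.atTop (nhds 0) := by
    have h0 : Filter.Tendsto (fun s : ℝ => k * s) Filter.atTop Filter.atTop :=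
      Filter.Tendsto.const_mul_atTop hk Filter.tendsto_id
    have h1 : Filter.Tendsto (fun s : ℝ => -(k * s)) Filter.atTop Filter.atBot :=
      Filter.tendsto_neg_atTop_atBot.comp h0
    have h2 : Filter.Tendsto (fun s : ℝ => Real.exp (-(k * s))) Filter.atTop (nhds 0) :=
      Real.tendsto_exp_atBot.comp h1
    simpa using (h2.neg).div_const k
  have := integral_Ioi_of_hasDerivAt_of_tendsto' hderiv hint htend
  rw [this, mul_zero, neg_zero, Real.exp_zero]
  ring

/-- Technical lemma: from stratified exponential tail bounds to a bound in expectation. -/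
theorem expectation_bound_from_tail_bounds
    {Ω : Type} [MeasurableSpace Ω] (μ : Measure Ω) [IsProbabilityMeasure μ]
    (a b c β : ℝ) (ha : 0 < a) (hb : 0 < b) (hc : 0 < c) (hβ : 0 < β) (hβ1 : β ≤ 1)
    (xlow : ℕ → ℝ) (hxlowpos : ∀ N, 2 ≤ N → 0 < xlow N)
    (hxlowdec : ∀ m n : ℕ, 2 ≤ m → m ≤ n → xlow n ≤ xlow m)
    (hxlowlim : Filter.Tendsto xlow Filter.atTop (nhds 0))
    (U : Ω → ℝ) (hUmeas : Measurable U) (hUint : Integrable U μ)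
    (htail : ∀ N : ℕ, 2 ≤ N → ∀ x : ℝ, xlow N ≤ x →
      μ {ω | x ≤ U ω} ≤ ENNReal.ofReal ((a * N) *
        (Real.exp (-x ^ (2 - β) / b) + Real.exp (-x / c))))
    (N : ℕ)
    (hN : sInf {n : ℕ | 2 ≤ n ∧ xlow n ≤ b ^ (1 / (2 - β)) ∧ 1 ≤ Real.log (a * n)} ≤ N) :
    ∫ ω, U ω ∂μ ≤ 3 * (b * Real.log (a * N)) ^ (1 / (2 - β)) + 2 * c * Real.log (a * N) := by
  have h2β : (0:ℝ) < 2 - β := by linarith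
  have hbpow : (0:ℝ) < b ^ (1 / (2 - β)) := Real.rpow_pos_of_pos hb _
  -- the defining set is nonempty
  have hSne : {n : ℕ | 2 ≤ n ∧ xlow n ≤ b ^ (1 / (2 - β)) ∧ 1 ≤ Real.log (a * n)}.Nonempty := by
    have hev : ∀ᶠ n in Filter.atTop, xlow n < b ^ (1 / (2 - β)) :=
      hxlowlim.eventually_lt_const hbpow
    obtain ⟨M, hM⟩ := Filter.eventually_atTop.mp hev
    refine ⟨max (max M 2) (Nat.ceil (Real.exp 1 / a)), ?_, ?_, ?_⟩
    · exact le_trans (le_max_right M 2) (le_max_left _ _)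
    · exact (hM _ (le_trans (le_max_left M 2) (le_max_left _ _))).le
    · have hn : (Real.exp 1 / a) ≤ (max (max M 2) (Nat.ceil (Real.exp 1 / a)) : ℕ) := by
        calc Real.exp 1 / a ≤ (Nat.ceil (Real.exp 1 / a) : ℝ) := Nat.le_ceil _
        _ ≤ _ := by exact_mod_cast Nat.cast_le.mpr (le_max_right _ _)
      have h1 : Real.exp 1 ≤ a * (max (max M 2) (Nat.ceil (Real.exp 1 / a)) : ℕ) := by
        rw [div_le_iff₀ ha] at hn; linarith [hn]
      calc (1:ℝ) = Real.log (Real.exp 1) := (Real.log_exp 1).symm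
      _ ≤ _ := Real.log_le_log (Real.exp_pos 1) h1
  set S := {n : ℕ | 2 ≤ n ∧ xlow n ≤ b ^ (1 / (2 - β)) ∧ 1 ≤ Real.log (a * n)} with hS
  obtain ⟨h2n0, hxn0, hln0⟩ := Nat.sInf_mem hSne
  set n0 := sInf S with hn0
  have hn0N : n0 ≤ N := hN
  have h2N : 2 ≤ N := le_trans h2n0 hn0N
  have hNpos : (0:ℝ) < (N:ℝ) := by positivity
  have haN : (0:ℝ) < a * N := by positivity
  set L := Real.log (a * N) with hL
  have hL1 : 1 ≤ L := by
    refine le_trans hln0 (Real.log_le_log (by positivity) ?_)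
    have : (n0:ℝ) ≤ (N:ℝ) := by exact_mod_cast hn0N
    nlinarith
  have hLpos : 0 < L := lt_of_lt_of_le one_pos hL1
  set t1 := (b * L) ^ (1 / (2 - β)) with ht1
  set t2 := c * L with ht2
  have hbL : 0 < b * L := by positivity
  have ht1pos : 0 < t1 := Real.rpow_pos_of_pos hbL _
  have ht2pos : 0 < t2 := by positivity
  set t := max t1 t2 with ht
  have ht1t : t1 ≤ t := le_max_left _ _
  have ht2t : t2 ≤ t := le_max_right _ _
  have htpos : 0 < t := lt_of_lt_of_le ht1pos ht1t
  -- t1 ^ (2-β) = b * L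
  have ht1pow : t1 ^ (2 - β) = b * L := by
    rw [ht1, one_div, Real.rpow_inv_rpow hbL.le (ne_of_gt h2β)]
  -- xlow N ≤ t1
  have hxN : xlow N ≤ t1 := by
    refine le_trans (hxlowdec n0 N h2n0 hn0N) (le_trans hxn0 ?_)
    exact Real.rpow_le_rpow hb.le (by nlinarith) (by positivity)
  -- rates
  set k1 := t1 ^ (1 - β) / b with hk1
  set k2 := 1 / c with hk2
  have hk1pos : 0 < k1 := by
    apply div_pos (Real.rpow_pos_of_pos ht1pos _) hb
  have hk2pos : 0 < k2 := by positivity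
  have ht1split : t1 ^ (1 - β) * t1 = t1 ^ (2 - β) := by
    nth_rewrite 2 [show t1 = t1 ^ (1:ℝ) by rw [Real.rpow_one]]
    rw [← Real.rpow_add ht1pos]; congr 1; ring
  have hk1t1 : k1 * t1 = L := by
    rw [hk1, div_mul_eq_mul_div, ht1split, ht1pow, mul_comm b L, mul_div_assoc,
      div_self hb.ne', mul_one]
  have hexpL : Real.exp (-L) = (a * N)⁻¹ := by
    rw [Real.exp_neg, Real.exp_log haN]
  -- the positive part
  set g := fun ω => max (U ω - t) 0 with hg
  have hgint : Integrable g μ := (hUint.sub (integrable_const t)).pos_part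
  have hgnn : 0 ≤ᵐ[μ] g := Filter.Eventually.of_forall fun ω => le_max_right _ _
  have hstep1 : ∫ ω, U ω ∂μ ≤ t + ∫ ω, g ω ∂μ := by
    have hle : ∀ ω, U ω ≤ t + g ω := by
      intro ω
      have h1 : U ω - t ≤ g ω := le_max_left _ _
      linarith
    calc ∫ ω, U ω ∂μ ≤ ∫ ω, (t + g ω) ∂μ :=
          integral_mono hUint ((integrable_const t).add hgint) hle
    _ = t + ∫ ω, g ω ∂μ := by
        rw [integral_add (integrable_const t) hgint, integral_const, probReal_univ,
          one_smul]
  have hstep2 : ∫ ω, g ω ∂μ = ∫ s in Set.Ioi (0:ℝ), (μ {ω | s < g ω}).toReal :=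
    hgint.integral_eq_integral_meas_lt hgnn
  -- the dominating function
  set F := fun s : ℝ => (a * N) * (Real.exp (-(k1 * t)) * Real.exp (-(k1 * s))
      + Real.exp (-(k2 * t)) * Real.exp (-(k2 * s))) with hF
  have hFint : IntegrableOn F (Set.Ioi (0:ℝ)) := by
    apply Integrable.const_mul
    exact ((exp_neg_integrableOn_Ioi 0 hk1pos).congr_fun (fun s _ => by rw [neg_mul])
        measurableSet_Ioi |>.const_mul _).add
      (((exp_neg_integrableOn_Ioi 0 hk2pos).congr_fun (fun s _ => by rw [neg_mul])
        measurableSet_Ioi).const_mul _)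
  have hstep3 : ∫ s in Set.Ioi (0:ℝ), (μ {ω | s < g ω}).toReal ≤ ∫ s in Set.Ioi (0:ℝ), F s := by
    apply integral_mono_of_nonneg
    · exact Filter.Eventually.of_forall fun s => ENNReal.toReal_nonneg
    · exact hFint
    · rw [Filter.EventuallyLE, ae_restrict_iff' measurableSet_Ioi]
      refine Filter.Eventually.of_forall fun s hs => ?_
      have hs0 : 0 < s := hs
      have hset : {ω | s < g ω} ⊆ {ω | t + s ≤ U ω} := by
        intro ω hω
        simp only [hg, Set.mem_setOf_eq, lt_max_iff] at hω
        rcases hω with h | h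
        · simp only [Set.mem_setOf_eq]; linarith
        · linarith
      have hts : xlow N ≤ t + s := by linarith [le_trans hxN ht1t]
      have hmeas := le_trans (measure_mono hset) (htail N h2N (t + s) hts)
      -- bound the tail value
      have hx1 : t1 ≤ t + s := by linarith
      have hxpos : 0 < t + s := by linarith
      have hexp1 : Real.exp (-(t + s) ^ (2 - β) / b) ≤ Real.exp (-(k1 * (t+s))) := by
        apply Real.exp_le_exp.mpr
        have hpow : t1 ^ (1 - β) * (t + s) ≤ (t + s) ^ (2 - β) := by
          have h1 : t1 ^ (1 - β) ≤ (t + s) ^ (1 - β) :=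
            Real.rpow_le_rpow ht1pos.le hx1 (by linarith)
          have h2 : (t + s) ^ (1 - β) * (t + s) = (t + s) ^ (2 - β) := by
            nth_rewrite 2 [show t + s = (t+s) ^ (1:ℝ) by rw [Real.rpow_one]]
            rw [← Real.rpow_add hxpos]; congr 1; ring
          calc t1 ^ (1 - β) * (t + s) ≤ (t + s) ^ (1 - β) * (t + s) :=
                mul_le_mul_of_nonneg_right h1 hxpos.le
          _ = _ := h2
        have hk1x : k1 * (t+s) ≤ (t+s) ^ (2-β) / b := by
          rw [hk1, div_mul_eq_mul_div]
          gcongr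
        have heq : -(t+s) ^ (2-β) / b = -((t+s) ^ (2-β) / b) := by ring
        rw [heq]
        exact neg_le_neg hk1x
      have hexp2 : Real.exp (-(t + s) / c) = Real.exp (-(k2 * (t+s))) := by
        congr 1; rw [hk2]; ring
      have hval : (a * N) * (Real.exp (-(t+s) ^ (2 - β) / b) + Real.exp (-(t+s) / c)) ≤ F s := by
        simp only [hF]
        have e1 : Real.exp (-(k1 * t)) * Real.exp (-(k1 * s)) = Real.exp (-(k1 * (t+s))) := by
          rw [← Real.exp_add]; ring_nf
        have e2 : Real.exp (-(k2 * t)) * Real.exp (-(k2 * s)) = Real.exp (-(k2 * (t+s))) := by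
          rw [← Real.exp_add]; ring_nf
        rw [e1, e2]
        apply mul_le_mul_of_nonneg_left _ haN.le
        exact add_le_add hexp1 (le_of_eq hexp2)
      calc (μ {ω | s < g ω}).toReal
          ≤ (ENNReal.ofReal ((a * N) * (Real.exp (-(t+s) ^ (2 - β) / b)
              + Real.exp (-(t+s) / c)))).toReal :=
            ENNReal.toReal_mono ENNReal.ofReal_ne_top hmeas
        _ = (a * N) * (Real.exp (-(t+s) ^ (2 - β) / b) + Real.exp (-(t+s) / c)) :=
            ENNReal.toReal_ofReal (by positivity)
        _ ≤ F s := hval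
  have hstep4 : ∫ s in Set.Ioi (0:ℝ), F s
      = (a * N) * (Real.exp (-(k1 * t)) * (1/k1) + Real.exp (-(k2 * t)) * (1/k2)) := by
    simp only [hF]
    rw [integral_const_mul]
    congr 1
    rw [integral_add
      (((exp_neg_integrableOn_Ioi 0 hk1pos).congr_fun (fun s _ => by rw [neg_mul])
        measurableSet_Ioi).const_mul _)
      (((exp_neg_integrableOn_Ioi 0 hk2pos).congr_fun (fun s _ => by rw [neg_mul])
        measurableSet_Ioi).const_mul _),
      integral_const_mul, integral_const_mul,
      integral_exp_neg_mul_Ioi_zero hk1pos, integral_exp_neg_mul_Ioi_zero hk2pos]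
  -- bound the two terms
  have hterm1 : (a * N) * (Real.exp (-(k1 * t)) * (1/k1)) ≤ t1 := by
    have h1 : Real.exp (-(k1 * t)) ≤ Real.exp (-L) := by
      apply Real.exp_le_exp.mpr
      have : L ≤ k1 * t := by rw [← hk1t1]; exact mul_le_mul_of_nonneg_left ht1t hk1pos.le
      linarith
    have h2 : (a * N) * (Real.exp (-(k1 * t)) * (1/k1)) ≤ (a*N) * (a*N)⁻¹ * (1/k1) := by
      rw [hexpL] at h1
      have h3 := mul_le_mul_of_nonneg_right h1 (le_of_lt (by positivity : (0:ℝ) < 1/k1))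
      have h4 := mul_le_mul_of_nonneg_left h3 haN.le
      calc (a * N) * (Real.exp (-(k1 * t)) * (1/k1))
          ≤ (a*N) * ((a*N)⁻¹ * (1/k1)) := h4
      _ = (a*N) * (a*N)⁻¹ * (1/k1) := by ring
    rw [mul_inv_cancel₀ (ne_of_gt haN), one_mul] at h2
    refine le_trans h2 ?_
    rw [div_le_iff₀ hk1pos, mul_comm, hk1t1]
    exact hL1
  have hterm2 : (a * N) * (Real.exp (-(k2 * t)) * (1/k2)) ≤ t2 := by
    have h1 : Real.exp (-(k2 * t)) ≤ Real.exp (-L) := by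
      apply Real.exp_le_exp.mpr
      have hk2t2 : k2 * t2 = L := by rw [hk2, ht2]; field_simp
      have : L ≤ k2 * t := by rw [← hk2t2]; exact mul_le_mul_of_nonneg_left ht2t hk2pos.le
      linarith
    have h2 : (a * N) * (Real.exp (-(k2 * t)) * (1/k2)) ≤ (a*N) * (a*N)⁻¹ * (1/k2) := by
      rw [hexpL] at h1
      have h3 := mul_le_mul_of_nonneg_right h1 (le_of_lt (by positivity : (0:ℝ) < 1/k2))
      have h4 := mul_le_mul_of_nonneg_left h3 haN.le
      calc (a * N) * (Real.exp (-(k2 * t)) * (1/k2))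
          ≤ (a*N) * ((a*N)⁻¹ * (1/k2)) := h4
      _ = (a*N) * (a*N)⁻¹ * (1/k2) := by ring
    rw [mul_inv_cancel₀ (ne_of_gt haN), one_mul] at h2
    refine le_trans h2 ?_
    rw [hk2]
    simp only [one_div, inv_inv]
    rw [ht2]; exact le_mul_of_one_le_right hc.le hL1
  have hfinal : ∫ ω, U ω ∂μ ≤ t + t1 + t2 := by
    have hFle : ∫ s in Set.Ioi (0:ℝ), F s ≤ t1 + t2 := by
      rw [hstep4, mul_add]
      exact add_le_add hterm1 hterm2
    rw [hstep2] at hstep1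
    linarith [le_trans hstep3 hFle]
  have htle : t ≤ t1 + t2 := max_le (by linarith) (by linarith)
  calc ∫ ω, U ω ∂μ ≤ t + t1 + t2 := hfinal
  _ ≤ 3 * t1 + 2 * t2 := by linarith
  _ = 3 * (b * Real.log (a * N)) ^ (1 / (2 - β)) + 2 * c * Real.log (a * N) := by
      rw [ht1, ht2, hL]; ring
end

section
/- Let 𝒪 be a measurable space, Θ a convex set of measurable functions from 𝒪 to ℝ, a₁, a₂ > 0, and ℓ a map assigning to each θ ∈ Θ a measurable function ℓ(θ) : 𝒪 → ℝ such that: (i) |ℓ(θ₁)(o) − ℓ(θ₂)(o)| ≤ a₁ |θ₁(o) − θ₂(o)| for all θ₁, θ₂ ∈ Θ and o ∈ 𝒪; (ii) for all s ∈ [0,1], θ₁, θ₂ ∈ Θ and o ∈ 𝒪, ℓ(sθ₁ + (1−s)θ₂)(o) − (a₂/2)(sθ₁(o) + (1−s)θ₂(o))² ≤ s(ℓ(θ₁)(o) − (a₂/2)θ₁(o)²) + (1−s)(ℓ(θ₂)(o) − (a₂/2)θ₂(o)²). Let P be a probability measure on 𝒪 such that ℓ(θ) and (ℓ(θ) − ℓ(θ°))²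 are P-integrable for all θ ∈ Θ, and let θ° ∈ Θ satisfy Pℓ(θ°) ≤ Pℓ(θ) for all θ ∈ Θ. Then for every θ ∈ Θ, P[(ℓ(θ) − ℓ(θ°))²] ≤ (4a₁²/a₂) P[ℓ(θ) − ℓ(θ°)]. -/
open MeasureTheory

/-- The classical strong convexity argument: a Lipschitz, strongly convex loss satisfies
a variance bound at its risk minimizer. -/
theorem strong_convexity_variance_bound
    {𝒪 : Type} [MeasurableSpace 𝒪]
    (Θ : Set (𝒪 → ℝ)) (hΘconv : Convex ℝ Θ) (hΘmeas : ∀ θ ∈ Θ, Measurable θ)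
    (a1 a2 : ℝ) (ha1 : 0 < a1) (ha2 : 0 < a2)
    (L : (𝒪 → ℝ) → 𝒪 → ℝ)
    (hLmeas : ∀ θ ∈ Θ, Measurable (L θ))
    -- (i) pointwise `a1`-Lipschitz continuity in `θ`
    (hLip : ∀ θ1 ∈ Θ, ∀ θ2 ∈ Θ, ∀ o : 𝒪, |L θ1 o - L θ2 o| ≤ a1 * |θ1 o - θ2 o|)
    -- (ii) pointwise `a2`-strong convexity in `θ`
    (hConv : ∀ s : ℝ, 0 ≤ s → s ≤ 1 → ∀ θ1 ∈ Θ, ∀ θ2 ∈ Θ, ∀ o : 𝒪,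
      L (s • θ1 + (1 - s) • θ2) o - a2 / 2 * (s * θ1 o + (1 - s) * θ2 o) ^ 2 ≤
        s * (L θ1 o - a2 / 2 * θ1 o ^ 2) + (1 - s) * (L θ2 o - a2 / 2 * θ2 o ^ 2))
    (P : Measure 𝒪) [IsProbabilityMeasure P]
    (hInt : ∀ θ ∈ Θ, Integrable (L θ) P)
    (θcirc : 𝒪 → ℝ) (hθcirc : θcirc ∈ Θ)
    (hInt2 : ∀ θ ∈ Θ, Integrable (fun o => (L θ o - L θcirc o) ^ 2) P)
    (hmin : ∀ θ ∈ Θ, ∫ o, L θcirc o ∂P ≤ ∫ o, L θ o ∂P) :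
    ∀ θ ∈ Θ, ∫ o, (L θ o - L θcirc o) ^ 2 ∂P ≤
      4 * a1 ^ 2 / a2 * ∫ o, (L θ o - L θcirc o) ∂P := by
  intro θ hθ
  set s : ℝ := 2⁻¹ with hs
  set θm : 𝒪 → ℝ := s • θ + (1 - s) • θcirc with hθm
  have hθmΘ : θm ∈ Θ := hΘconv hθ hθcirc (by norm_num) (by norm_num) (by norm_num)
  -- pointwise midpoint inequality
  have hpt : ∀ o : 𝒪, a2 / 8 * (θ o - θcirc o) ^ 2 ≤
      2⁻¹ * L θ o + 2⁻¹ * L θcirc o - L θm o := by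
    intro o
    have h := hConv s (by norm_num) (by norm_num) θ hθ θcirc hθcirc o
    have hid : a2 / 2 * (s * θ o + (1 - s) * θcirc o) ^ 2 =
        s * (a2 / 2 * θ o ^ 2) + (1 - s) * (a2 / 2 * θcirc o ^ 2)
          - a2 / 8 * (θ o - θcirc o) ^ 2 := by
      simp only [hs]; ring
    simp only [hθm, hs] at h hid ⊢
    linarith
  -- integrability of (θ - θcirc)^2
  have hg_int : Integrable (fun o => 2⁻¹ * L θ o + 2⁻¹ * L θcirc o - L θm o) P :=
    (((hInt θ hθ).const_mul _).add ((hInt θcirc hθcirc).const_mul _)).sub (hInt θm hθmΘ)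
  have hsq_meas : Measurable (fun o => (θ o - θcirc o) ^ 2) :=
    ((hΘmeas θ hθ).sub (hΘmeas θcirc hθcirc)).pow_const 2
  have hsq_int : Integrable (fun o => (θ o - θcirc o) ^ 2) P := by
    refine (hg_int.const_mul (8 / a2)).mono hsq_meas.aestronglyMeasurable ?_
    filter_upwards with o
    have h := hpt o
    have h0 : (0:ℝ) ≤ (θ o - θcirc o) ^ 2 := sq_nonneg _
    have hg0 : (0:ℝ) ≤ 2⁻¹ * L θ o + 2⁻¹ * L θcirc o - L θm o :=
      le_trans (mul_nonneg (by positivity) h0) h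
    rw [Real.norm_eq_abs, Real.norm_eq_abs, abs_of_nonneg h0,
      abs_of_nonneg (mul_nonneg (by positivity) hg0)]
    calc (θ o - θcirc o) ^ 2
        = 8 / a2 * (a2 / 8 * (θ o - θcirc o) ^ 2) := by field_simp
      _ ≤ 8 / a2 * (2⁻¹ * L θ o + 2⁻¹ * L θcirc o - L θm o) :=
          mul_le_mul_of_nonneg_left h (by positivity)
  -- step 1 : Q ≤ a1^2 * S
  have h1 : ∫ o, (L θ o - L θcirc o) ^ 2 ∂P ≤ ∫ o, a1 ^ 2 * (θ o - θcirc o) ^ 2 ∂P := by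
    refine integral_mono (hInt2 θ hθ) (hsq_int.const_mul _) ?_
    intro o
    have h := hLip θ hθ θcirc hθcirc o
    simp only
    nlinarith [mul_self_le_mul_self (abs_nonneg (L θ o - L θcirc o)) h,
      abs_nonneg (θ o - θcirc o), sq_abs (L θ o - L θcirc o), sq_abs (θ o - θcirc o)]
  -- step 2 : (a2/8) S ≤ ... via integral of hpt
  have h2 : a2 / 8 * ∫ o, (θ o - θcirc o) ^ 2 ∂P ≤
      2⁻¹ * ∫ o, L θ o ∂P + 2⁻¹ * ∫ o, L θcirc o ∂P - ∫ o, L θm o ∂P := by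
    have hfi : Integrable (fun o => 2⁻¹ * L θ o + 2⁻¹ * L θcirc o) P :=
      ((hInt θ hθ).const_mul _).add ((hInt θcirc hθcirc).const_mul _)
    have h1i : Integrable (fun o => 2⁻¹ * L θ o) P := (hInt θ hθ).const_mul _
    have h2i : Integrable (fun o => 2⁻¹ * L θcirc o) P := (hInt θcirc hθcirc).const_mul _
    have := integral_mono (hsq_int.const_mul (a2 / 8)) hg_int hpt
    rw [integral_const_mul] at this
    rwa [integral_sub hfi (hInt θm hθmΘ), integral_add h1i h2i,
      integral_const_mul, integral_const_mul] at this
  have h3 : ∫ o, L θcirc o ∂P ≤ ∫ o, L θm o ∂P := hmin θm hθmΘ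
  have hD : ∫ o, (L θ o - L θcirc o) ∂P = ∫ o, L θ o ∂P - ∫ o, L θcirc o ∂P :=
    integral_sub (hInt θ hθ) (hInt θcirc hθcirc)
  have hS : a2 * ∫ o, (θ o - θcirc o) ^ 2 ∂P ≤ 4 * ∫ o, (L θ o - L θcirc o) ∂P := by
    rw [hD]; linarith
  have haS : ∫ o, a1 ^ 2 * (θ o - θcirc o) ^ 2 ∂P
      = a1 ^ 2 * ∫ o, (θ o - θcirc o) ^ 2 ∂P := integral_const_mul _ _
  rw [div_mul_eq_mul_div, le_div_iff₀ ha2]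
  rw [haS] at h1
  nlinarith [mul_le_mul_of_nonneg_left hS (sq_nonneg a1),
    mul_le_mul_of_nonneg_right h1 ha2.le]
end

section
/- Let (Ω, 𝓕, P) be a probability space, E ∈ 𝓕 an event, and a, b, c > 0. Suppose that for every real number p ≥ 2, P(E) ≤ (3π/2) ((ap + b√p)/c)^p. Then P(E) ≤ exp( 2 − c²/(e²b² + 2eac) ). -/
open MeasureTheory Real

/-- Converting a family of Rosenthal-type moment bounds, optimized over the order `p`,
into a Bernstein-type exponential tail bound. -/
theorem moment_bounds_to_exponential_bound
    {Ω : Type} [MeasurableSpace Ω] (μ : Measure Ω) [IsProbabilityMeasure μ]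
    (E : Set Ω) (hE : MeasurableSet E)
    (a b c : ℝ) (ha : 0 < a) (hb : 0 < b) (hc : 0 < c)
    (h : ∀ p : ℝ, 2 ≤ p →
      μ E ≤ ENNReal.ofReal (3 * π / 2 * ((a * p + b * Real.sqrt p) / c) ^ p)) :
    μ E ≤ ENNReal.ofReal (Real.exp (2 -
      c ^ 2 / (Real.exp 1 ^ 2 * b ^ 2 + 2 * Real.exp 1 * a * c))) := by
  set D := Real.exp 1 ^ 2 * b ^ 2 + 2 * Real.exp 1 * a * c with hD
  have he : (0:ℝ) < Real.exp 1 := Real.exp_pos 1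
  have hDpos : 0 < D := by positivity
  set p := c ^ 2 / D with hp
  have hppos : 0 < p := by positivity
  by_cases h2 : 2 ≤ p
  · refine (h p h2).trans (ENNReal.ofReal_le_ofReal ?_)
    set s := Real.sqrt D with hs
    have hs2 : s ^ 2 = D := Real.sq_sqrt hDpos.le
    have hspos : 0 < s := Real.sqrt_pos.mpr hDpos
    have hsqrtp : Real.sqrt p = c / s := by
      rw [hp, Real.sqrt_div (sq_nonneg c), Real.sqrt_sq hc.le]
    -- key algebraic inequality
    have hbs : b * s ≤ Real.exp 1 * b ^ 2 + a * c := by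
      have h4 : (Real.exp 1 * b ^ 2 + a * c) ^ 2 - (b * s) ^ 2 = a ^ 2 * c ^ 2 := by
        rw [mul_pow, hs2, hD]; ring
      have h5 : 0 < b * s + (Real.exp 1 * b ^ 2 + a * c) := by positivity
      nlinarith [h4, h5, sq_nonneg (a * c)]
    have key : Real.exp 1 * (a * p + b * Real.sqrt p) ≤ c := by
      have h3 : Real.exp 1 * a * c + Real.exp 1 * (b * s) ≤ s ^ 2 := by
        rw [hs2]; nlinarith [hbs, he]
      rw [hsqrtp, hp, ← hs2]
      calc Real.exp 1 * (a * (c ^ 2 / s ^ 2) + b * (c / s))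
          = (Real.exp 1 * a * c * c + Real.exp 1 * (b * s) * c) / s ^ 2 := by
            field_simp
        _ ≤ c := by
            rw [div_le_iff₀ (by positivity)]
            nlinarith [h3, hc]
    have hX : (a * p + b * Real.sqrt p) / c ≤ Real.exp (-1) := by
      rw [div_le_iff₀ hc, Real.exp_neg]
      nlinarith [key, he, mul_inv_cancel₀ he.ne']
    have hXnn : 0 ≤ (a * p + b * Real.sqrt p) / c := by
      have : 0 ≤ Real.sqrt p := Real.sqrt_nonneg p
      positivity
    have hpow : ((a * p + b * Real.sqrt p) / c) ^ p ≤ Real.exp (-p) := by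
      calc ((a * p + b * Real.sqrt p) / c) ^ p
          ≤ Real.exp (-1) ^ p := Real.rpow_le_rpow hXnn hX hppos.le
        _ = Real.exp (-p) := by
            rw [Real.exp_neg, Real.inv_rpow (Real.exp_pos 1).le,
              Real.exp_one_rpow, ← Real.exp_neg]
    have hpi : 3 * π / 2 ≤ Real.exp 2 := by
      have he2 : Real.exp 2 = Real.exp 1 * Real.exp 1 := by
        rw [← Real.exp_add]; norm_num
      nlinarith [Real.pi_le_four, Real.exp_one_gt_d9]
    calc 3 * π / 2 * ((a * p + b * Real.sqrt p) / c) ^ p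
        ≤ Real.exp 2 * Real.exp (-p) :=
          mul_le_mul hpi hpow (Real.rpow_nonneg hXnn p) (Real.exp_pos 2).le
      _ = Real.exp (2 - p) := by rw [← Real.exp_add]; ring_nf
  · exact prob_le_one.trans
      (ENNReal.one_le_ofReal.mpr (Real.one_le_exp (by linarith [not_le.mp h2])))
end
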